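/- arXiv:2410.21121 — 3 statements merged into one kernel-verified Lean document; each statement's English description precedes it below -/
import Mathlib

section
/- Let $R$ be a finitely generated unital associative algebra and $M$ a finitely generated left $R$-module with Gelfand–Kirillov dimension strictly less than $1$. Then $M$ is finite-dimensional as a vector space. -/
/-!
If the filtration `C^m M0` of `M` ever stops growing, `C^m M0 = C^(m+1) M0`, then the stable
term is invariant under the generators `C` of `R`, hence an `R`-submodule containing the
generators `M0` of `M`, so `M = C^m M0` is finite-dimensional. Otherwise every step adds a
dimension, `dim C^m M0 ≥ m`, and then `log dim C^m M0 / log m ≥ 1` for all `m ≥ 2`, forcing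
`GKdim ≥ 1`.
-/

/-- `CfilM C M0 m` is the subspace `C^m M0`: the span of all products `r • v`
with `r` in the span of products of (at most, since `1 ∈ C`) `m` elements of `C`
and `v ∈ M0`. -/
noncomputable def CfilM {k R M : Type*} [Field k] [Ring R] [Algebra k R]
    [AddCommGroup M] [Module k M] [Module R M] [IsScalarTower k R M]
    (C : Submodule k R) (M0 : Submodule k M) (m : ℕ) : Submodule k M :=
  Submodule.span k {x : M | ∃ r ∈ (C ^ m : Submodule k R), ∃ v ∈ M0, x = r • v}

/-- The Gelfand–Kirillov dimension of `M` computed from the generating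
subspaces `C` and `M0`, as `limsup_m log (dim C^m M0) / log m`. -/
noncomputable def GKdim {k R M : Type*} [Field k] [Ring R] [Algebra k R]
    [AddCommGroup M] [Module k M] [Module R M] [IsScalarTower k R M]
    (C : Submodule k R) (M0 : Submodule k M) : EReal :=
  Filter.atTop.limsup (fun m : ℕ =>
    ((Real.log (Module.finrank k (CfilM C M0 m)) / Real.log m : ℝ) : EReal))

theorem Submodule.smul_mem_of_adjoin_eq_top {k R M : Type*} [CommSemiring k] [Semiring R]
    [Algebra k R] [AddCommMonoid M] [Module k M] [Module R M] [IsScalarTower k R M]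
    {s : Set R} (hs : Algebra.adjoin k s = ⊤) {N : Submodule k M}
    (hN : ∀ c ∈ s, ∀ x ∈ N, c • x ∈ N) (r : R) {x : M} (hx : x ∈ N) : r • x ∈ N := by
  have hr : r ∈ Algebra.adjoin k s := hs ▸ Algebra.mem_top
  induction hr using Algebra.adjoin_induction generalizing x with
  | mem c hc => exact hN c hc x hx
  | algebraMap a => rw [algebraMap_smul]; exact N.smul_mem a hx
  | add r r' _ _ h h' => rw [add_smul]; exact N.add_mem (h hx) (h' hx)
  | mul r r' _ _ h h' => rw [mul_smul]; exact h (h' hx)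

theorem Submodule.eq_top_of_smul_mem_of_adjoin_eq_top {k R M : Type*} [CommSemiring k]
    [Semiring R] [Algebra k R] [AddCommMonoid M] [Module k M] [Module R M]
    [IsScalarTower k R M] {s : Set R} (hs : Algebra.adjoin k s = ⊤) {N : Submodule k M}
    (hN : ∀ c ∈ s, ∀ x ∈ N, c • x ∈ N) {S : Set M} (hS : Submodule.span R S = ⊤)
    (hSN : S ⊆ N) : N = ⊤ := by
  refine Submodule.eq_top_iff'.2 fun x => ?_
  have hx : x ∈ Submodule.span R S := hS ▸ Submodule.mem_top
  induction hx using Submodule.span_induction with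
  | mem x hx => exact hSN hx
  | zero => exact N.zero_mem
  | add x y _ _ hx hy => exact N.add_mem hx hy
  | smul r x _ hx => exact N.smul_mem_of_adjoin_eq_top hs hN r hx

section CfilM

variable {k R M : Type*} [Field k] [Ring R] [Algebra k R]
    [AddCommGroup M] [Module k M] [Module R M] [IsScalarTower k R M]
    {C : Submodule k R} {M0 : Submodule k M}

theorem CfilM_eq_map₂ (m : ℕ) :
    CfilM C M0 m = Submodule.map₂ (Algebra.lsmul k k M).toLinearMap (C ^ m) M0 := by
  rw [CfilM, Submodule.map₂_eq_span_image2]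
  congr 1
  ext x
  simp only [Set.mem_ofPred_eq, Set.mem_image2, SetLike.mem_coe, AlgHom.toLinearMap_apply,
    Algebra.lsmul_coe, eq_comm]

theorem smul_mem_CfilM {r : R} {v : M} {m : ℕ} (hr : r ∈ C ^ m) (hv : v ∈ M0) :
    r • v ∈ CfilM C M0 m :=
  Submodule.subset_span ⟨r, hr, v, hv, rfl⟩

theorem finiteDimensional_CfilM [FiniteDimensional k C] [FiniteDimensional k M0] (m : ℕ) :
    FiniteDimensional k (CfilM C M0 m) := by
  rw [← Submodule.fg_iff_finiteDimensional, CfilM_eq_map₂]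
  exact ((C.fg_iff_finiteDimensional.2 ‹_›).pow m).map₂ _ (M0.fg_iff_finiteDimensional.2 ‹_›)

theorem smul_mem_CfilM_succ {c : R} (hc : c ∈ C) {x : M} {m : ℕ} (hx : x ∈ CfilM C M0 m) :
    c • x ∈ CfilM C M0 (m + 1) := by
  induction hx using Submodule.span_induction with
  | mem x hx =>
    obtain ⟨r, hr, v, hv, rfl⟩ := hx
    rw [smul_smul]
    exact smul_mem_CfilM (pow_succ' C m ▸ Submodule.mul_mem_mul hc hr) hv
  | zero => simp
  | add y z _ _ hy hz => rw [smul_add]; exact Submodule.add_mem _ hy hz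
  | smul a y _ hy => rw [smul_comm]; exact Submodule.smul_mem _ a hy

theorem le_CfilM (hC1 : (1 : R) ∈ C) (m : ℕ) : M0 ≤ CfilM C M0 m := fun v hv => by
  have h1 : (1 : R) ∈ C ^ m :=
    Submodule.one_le.1 (one_le_pow_of_one_le' (Submodule.one_le.2 hC1) m)
  simpa using smul_mem_CfilM h1 hv

theorem CfilM_mono (hC1 : (1 : R) ∈ C) : Monotone (CfilM C M0) := fun _ _ hmn =>
  Submodule.span_mono fun _ ⟨r, hr, v, hv, hx⟩ =>
    ⟨r, pow_le_pow_right' (Submodule.one_le.2 hC1) hmn hr, v, hv, hx⟩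

theorem CfilM_eq_top_of_eq_succ (hC1 : (1 : R) ∈ C) (hCgen : Algebra.adjoin k (C : Set R) = ⊤)
    (hM0gen : Submodule.span R (M0 : Set M) = ⊤) {m : ℕ}
    (hm : CfilM C M0 m = CfilM C M0 (m + 1)) : CfilM C M0 m = ⊤ :=
  Submodule.eq_top_of_smul_mem_of_adjoin_eq_top hCgen
    (fun _ hc _ hx => hm ▸ smul_mem_CfilM_succ hc hx) hM0gen (le_CfilM hC1 m)

theorem le_finrank_CfilM (hC1 : (1 : R) ∈ C) [FiniteDimensional k C] [FiniteDimensional k M0]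
    (hgrow : ∀ m, CfilM C M0 m ≠ CfilM C M0 (m + 1)) (m : ℕ) :
    m ≤ Module.finrank k (CfilM C M0 m) := by
  have := finiteDimensional_CfilM (C := C) (M0 := M0)
  refine StrictMono.id_le (f := fun n => Module.finrank k (CfilM C M0 n))
    (strictMono_nat_of_lt_succ fun n => ?_) m
  exact Submodule.finrank_lt_finrank_of_lt ((CfilM_mono hC1 n.le_succ).lt_of_ne (hgrow n))

theorem one_le_GKdim (hdim : ∀ m, m ≤ Module.finrank k (CfilM C M0 m)) : 1 ≤ GKdim C M0 := by
  refine Filter.le_limsup_of_frequently_le'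
    (Filter.eventually_atTop.2 ⟨2, fun m hm => ?_⟩).frequently
  have hlog_pos : 0 < Real.log m := Real.log_pos (by exact_mod_cast hm)
  have hlog_le : Real.log m ≤ Real.log (Module.finrank k (CfilM C M0 m)) :=
    Real.log_le_log (by positivity) (by exact_mod_cast hdim m)
  exact_mod_cast (one_le_div hlog_pos).2 hlog_le

end CfilM

theorem stmt2 {k R M : Type*} [Field k] [Ring R] [Algebra k R]
    [AddCommGroup M] [Module k M] [Module R M] [IsScalarTower k R M]
    (C : Submodule k R) (hC1 : (1 : R) ∈ C) (hCfd : FiniteDimensional k C)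
    (hCgen : Algebra.adjoin k (C : Set R) = ⊤)
    (M0 : Submodule k M) (hM0fd : FiniteDimensional k M0)
    (hM0gen : Submodule.span R (M0 : Set M) = ⊤)
    (hGK : GKdim C M0 < 1) :
    FiniteDimensional k M := by
  by_cases hstab : ∃ m, CfilM C M0 m = CfilM C M0 (m + 1)
  · obtain ⟨m, hm⟩ := hstab
    have := finiteDimensional_CfilM (C := C) (M0 := M0) m
    rw [CfilM_eq_top_of_eq_succ hC1 hCgen hM0gen hm] at this
    exact Module.Finite.equiv Submodule.topEquiv
  · have hdim := le_finrank_CfilM hC1 (not_exists.1 hstab)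
    exact absurd (one_le_GKdim hdim) (not_le.2 hGK)
end

section
/- Let $\mathcal{L}_+ = \mathfrak{m}\,\mathrm{Der}(\Bbbk[X_1,\dots,X_n])$ be the Lie algebra of polynomial vector fields vanishing at the origin, graded as $\mathcal{L}_+ = \bigoplus_{d\geq 0} \mathcal{L}_d$ where $\mathcal{L}_d$ is spanned by $X^k \partial/\partial X_i$ with $|k| = d+1$. If $n > 1$, then the subalgebra $\mathcal{L}_{++} = \bigoplus_{k \geq 2} \mathcal{L}_k$ is generated as a Lie algebra by $\mathcal{L}_1$; consequently $\mathcal{L}_0 \oplus \mathcal{L}_1$ generates $\mathcal{L}_+$ as a Lie algebra. -/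
open MvPolynomial

variable (k : Type*) [Field k] [CharZero k] (n : ℕ)

/-- The maximal ideal `𝔪 = (X₁, …, Xₙ)` at the origin. -/
noncomputable def mIdeal : Ideal (MvPolynomial (Fin n) k) :=
  Ideal.span (Set.range (X : Fin n → MvPolynomial (Fin n) k))

/-- The homogeneous component `ℒ_d` of the Lie algebra of vector fields:
derivations whose coefficients (the values on the `Xᵢ`) are homogeneous of
degree `d + 1`. -/
noncomputable def Lgrade (d : ℕ) :
    Submodule k (Derivation k (MvPolynomial (Fin n) k) (MvPolynomial (Fin n) k)) where
  carrier := {D | ∀ i, D (X i) ∈ homogeneousSubmodule (Fin n) k (d + 1)}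
  add_mem' := by
    intro a b ha hb i
    simpa using add_mem (ha i) (hb i)
  zero_mem' := by
    intro i; simp
  smul_mem' := by
    intro c D hD i
    simpa using Submodule.smul_mem _ c (hD i)

/-!
Write `X^m ∂ᵢ` for `X^m ∂/∂Xᵢ`. If `a + b = m + eᵢ` then `⁅X^a ∂ᵢ, X^b ∂ᵢ⁆ = (bᵢ - aᵢ) X^m ∂ᵢ`,
so in characteristic zero `X^m ∂ᵢ` is a bracket of a field in `ℒ₁` (`|a| = 2`) and a field
with `|b| = |m| - 1`, as soon as `a` can be chosen with `aᵢ ≠ bᵢ`; induction on `|m|` generates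
every `X^m ∂ᵢ` with `|m| ≥ 3` from `ℒ₁`. One of `a = 2eᵢ`, `a = eᵢ + eⱼ` works unless
`m = 3eᵢ`, and `Xᵢ³ ∂ᵢ` comes from the mixed bracket
`⁅Xᵢ² ∂ⱼ, XᵢXⱼ ∂ᵢ⁆ = Xᵢ³ ∂ᵢ - 2 Xᵢ²Xⱼ ∂ⱼ` with `j ≠ i`.
-/

lemma Finsupp.degree_tsub_single_add_one {σ : Type*} {m : σ →₀ ℕ} {j : σ} (hj : m j ≠ 0) :
    (m - Finsupp.single j 1).degree + 1 = m.degree := by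
  have hle : Finsupp.single j 1 ≤ m := Finsupp.single_le_iff.mpr (Nat.one_le_iff_ne_zero.mpr hj)
  conv_rhs => rw [← tsub_add_cancel_of_le hle]
  rw [map_add, Finsupp.degree_single]

namespace MvPolynomial

section CommRing

variable {σ R : Type*} [CommRing R]

noncomputable def vectorField (p : MvPolynomial σ R) (i : σ) :
    Derivation R (MvPolynomial σ R) (MvPolynomial σ R) :=
  p • pderiv i

@[simp]
lemma vectorField_apply (p f : MvPolynomial σ R) (i : σ) :
    vectorField p i f = p * pderiv i f :=
  rfl

lemma vectorField_sub (p q : MvPolynomial σ R) (i : σ) :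
    vectorField (p - q) i = vectorField p i - vectorField q i := by
  ext f
  simp [sub_mul]

lemma vectorField_monomial (m : σ →₀ ℕ) (c : R) (i : σ) :
    vectorField (monomial m c) i = c • vectorField (monomial m 1) i := by
  rw [vectorField, vectorField, ← smul_assoc, smul_monomial, smul_eq_mul, mul_one]

lemma vectorField_eq_sum_monomial (p : MvPolynomial σ R) (i : σ) :
    vectorField p i = ∑ m ∈ p.support, coeff m p • vectorField (monomial m 1) i := by
  simp_rw [← vectorField_monomial]
  conv_lhs => rw [← support_sum_monomial_coeff p]
  exact Finset.sum_smul

lemma derivation_eq_sum_vectorField [Fintype σ]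
    (D : Derivation R (MvPolynomial σ R) (MvPolynomial σ R)) :
    D = ∑ i, vectorField (D (X i)) i := by
  classical
  refine derivation_ext fun l => ?_
  rw [show ⇑(∑ i, vectorField (D (X i)) i) = ∑ i, ⇑(vectorField (D (X i)) i) from
    map_sum Derivation.coeFnAddMonoidHom _ _, Finset.sum_apply]
  simp [pderiv_X, Pi.single_apply]

lemma derivation_mem_of_forall_vectorField_monomial_mem [Fintype σ]
    {S : Submodule R (Derivation R (MvPolynomial σ R) (MvPolynomial σ R))}
    {D : Derivation R (MvPolynomial σ R) (MvPolynomial σ R)}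
    (h : ∀ i, ∀ m ∈ (D (X i)).support, vectorField (monomial m 1) i ∈ S) : D ∈ S := by
  rw [derivation_eq_sum_vectorField D]
  refine sum_mem fun i _ => ?_
  rw [vectorField_eq_sum_monomial]
  exact sum_mem fun m hm => S.smul_mem _ (h i m hm)

lemma lie_vectorField (p q : MvPolynomial σ R) (i j : σ) :
    ⁅vectorField p i, vectorField q j⁆ =
      vectorField (p * pderiv i q) j - vectorField (q * pderiv j p) i := by
  classical
  refine derivation_ext fun l => ?_
  rw [Derivation.commutator_apply, Derivation.sub_apply]
  by_cases hil : i = l <;> by_cases hjl : j = l <;>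
    simp [pderiv_X, hil, hjl]

lemma monomial_mul_pderiv_monomial {a b m : σ →₀ ℕ} {l : σ}
    (hab : a + b = m + Finsupp.single l 1) :
    (monomial a 1 : MvPolynomial σ R) * pderiv l (monomial b 1) = monomial m (b l : R) := by
  rw [pderiv_monomial, monomial_mul]
  simp only [one_mul]
  rcases Nat.eq_zero_or_pos (b l) with hbl | hbl
  · simp [hbl]
  · rw [← add_tsub_assoc_of_le (Finsupp.single_le_iff.mpr hbl), hab, add_tsub_cancel_right]

lemma lie_vectorField_monomial_self {a b m : σ →₀ ℕ} {i : σ}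
    (hab : a + b = m + Finsupp.single i 1) :
    ⁅vectorField (monomial a (1 : R)) i, vectorField (monomial b (1 : R)) i⁆ =
      ((b i : R) - a i) • vectorField (monomial m 1) i := by
  rw [lie_vectorField, monomial_mul_pderiv_monomial hab,
    monomial_mul_pderiv_monomial ((add_comm b a).trans hab), ← vectorField_sub, ← map_sub,
    vectorField_monomial]

lemma derivation_map_mem_idealOfVars {D : Derivation R (MvPolynomial σ R) (MvPolynomial σ R)}
    (hD : ∀ i, D (X i) ∈ idealOfVars σ R) {p : MvPolynomial σ R} (hp : p ∈ idealOfVars σ R) :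
    D p ∈ idealOfVars σ R := by
  induction hp using Submodule.span_induction with
  | mem x hx =>
    obtain ⟨i, rfl⟩ := hx
    exact hD i
  | zero => simp
  | add x y _ _ hx hy => simpa using add_mem hx hy
  | smul r x hx ih =>
    rw [smul_eq_mul, Derivation.leibniz, smul_eq_mul, smul_eq_mul]
    exact add_mem (Ideal.mul_mem_left _ r ih) (Ideal.mul_mem_right _ _ hx)

variable (σ R) in
/-- `ℒ₊ = 𝔪 Der`. -/
noncomputable def vectorFieldsVanishingAtOrigin :
    LieSubalgebra R (Derivation R (MvPolynomial σ R) (MvPolynomial σ R)) where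
  carrier := {D | ∀ i, D (X i) ∈ idealOfVars σ R}
  add_mem' ha hb i := add_mem (ha i) (hb i)
  zero_mem' _ := zero_mem _
  smul_mem' c D hD i := by
    rw [Derivation.smul_apply, smul_eq_C_mul]
    exact Ideal.mul_mem_left _ _ (hD i)
  lie_mem' {D₁ D₂} h₁ h₂ i := by
    rw [Derivation.commutator_apply]
    exact sub_mem (derivation_map_mem_idealOfVars h₁ (h₂ i))
      (derivation_map_mem_idealOfVars h₂ (h₁ i))

end CommRing

section Field

open Finsupp (single)

variable {K σ : Type*} [Field K] [CharZero K]
  {S : LieSubalgebra K (Derivation K (MvPolynomial σ K) (MvPolynomial σ K))}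

lemma vectorField_monomial_mem_of_lie_mem {a b m : σ →₀ ℕ} {i : σ}
    (hab : a + b = m + single i 1) (hne : a i ≠ b i)
    (ha : vectorField (monomial a 1) i ∈ S) (hb : vectorField (monomial b 1) i ∈ S) :
    vectorField (monomial m (1 : K)) i ∈ S := by
  have hc : (b i : K) - a i ≠ 0 := sub_ne_zero.mpr (Nat.cast_injective.ne hne.symm)
  have h := S.smul_mem ((b i : K) - a i)⁻¹ (S.lie_mem ha hb)
  rwa [lie_vectorField_monomial_self hab, smul_smul, inv_mul_cancel₀ hc, one_smul] at h

lemma vectorField_X_pow_three_mem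
    (hquadratic : ∀ (a : σ →₀ ℕ) (j : σ), a.degree = 2 → vectorField (monomial a (1 : K)) j ∈ S)
    {i j : σ} (hji : j ≠ i) :
    vectorField (monomial (single i 3) (1 : K)) i ∈ S := by
  have hXiXj : (single i 1 + single j 1).degree = 2 := by
    simp [Finsupp.degree_single]
  have hXi2Xj : vectorField (monomial (single i 2 + single j 1) (1 : K)) j ∈ S :=
    vectorField_monomial_mem_of_lie_mem (a := single j 2) (b := single i 2)
      (by rw [add_assoc, ← Finsupp.single_add, add_comm]) (by simp [hji])
      (hquadratic _ _ (Finsupp.degree_single _ _)) (hquadratic _ _ (Finsupp.degree_single _ _))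
  have hlie : ⁅vectorField (monomial (single i 2) (1 : K)) j,
      vectorField (monomial (single i 1 + single j 1) (1 : K)) i⁆ =
        vectorField (monomial (single i 3) (1 : K)) i -
          (2 : K) • vectorField (monomial (single i 2 + single j 1) (1 : K)) j := by
    rw [lie_vectorField,
      monomial_mul_pderiv_monomial (m := single i 3)
        (by rw [← add_assoc, ← Finsupp.single_add]),
      monomial_mul_pderiv_monomial (m := single i 2 + single j 1) (by abel)]
    simp [hji, vectorField_monomial _ (2 : K)]
  rw [← sub_add_cancel (vectorField (monomial (single i 3) (1 : K)) i)
    ((2 : K) • vectorField (monomial (single i 2 + single j 1) (1 : K)) j), ← hlie]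
  exact add_mem (S.lie_mem (hquadratic _ _ (Finsupp.degree_single _ _)) (hquadratic _ _ hXiXj))
    (S.smul_mem _ hXi2Xj)

lemma vectorField_monomial_mem_of_forall_degree_eq_pred [Nontrivial σ]
    (hquadratic : ∀ (a : σ →₀ ℕ) (j : σ), a.degree = 2 → vectorField (monomial a (1 : K)) j ∈ S)
    {m : σ →₀ ℕ} (hm : 3 ≤ m.degree)
    (hpred : ∀ (b : σ →₀ ℕ), b.degree + 1 = m.degree →
      ∀ j, vectorField (monomial b (1 : K)) j ∈ S) (i : σ) :
    vectorField (monomial m (1 : K)) i ∈ S := by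
  have hsub : ∀ j, m j ≠ 0 → vectorField (monomial (m - single j 1) (1 : K)) i ∈ S :=
    fun j hj => hpred _ (Finsupp.degree_tsub_single_add_one hj) i
  by_cases hmixed : ∃ j ≠ i, m j ≠ 0 ∧ m i ≠ 1
  · obtain ⟨j, hji, hmj, hmi⟩ := hmixed
    have hle : single j 1 ≤ m := Finsupp.single_le_iff.mpr (Nat.one_le_iff_ne_zero.mpr hmj)
    refine vectorField_monomial_mem_of_lie_mem (a := single i 1 + single j 1)
      (by rw [add_assoc, add_tsub_cancel_of_le hle, add_comm]) ?_
      (hquadratic _ _ (by simp [Finsupp.degree_single])) (hsub j hmj)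
    simp [Finsupp.single_eq_of_ne' hji]
    omega
  push Not at hmixed
  by_cases hpure : m i ≠ 0 ∧ m i ≠ 3
  · have hle : single i 1 ≤ m := Finsupp.single_le_iff.mpr (Nat.one_le_iff_ne_zero.mpr hpure.1)
    refine vectorField_monomial_mem_of_lie_mem (a := single i 2)
      (by rw [show (2 : ℕ) = 1 + 1 from rfl, Finsupp.single_add, add_assoc,
        add_tsub_cancel_of_le hle, add_comm]) ?_
      (hquadratic _ _ (Finsupp.degree_single _ _)) (hsub i hpure.1)
    simp
    omega
  have hother : ∀ j ≠ i, m j = 0 := fun j hji => by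
    by_contra hmj
    have := hmixed j hji hmj
    omega
  have hm_eq : m = single i (m i) := by
    ext j
    rcases eq_or_ne j i with rfl | hji
    · simp
    · simp [hother j hji, Finsupp.single_eq_of_ne hji]
  have hmi : m i = 3 := by
    rw [hm_eq, Finsupp.degree_single] at hm
    omega
  obtain ⟨j, hji⟩ := exists_ne i
  rw [hm_eq, hmi]
  exact vectorField_X_pow_three_mem hquadratic hji

theorem vectorField_monomial_mem_of_three_le_degree [Nontrivial σ]
    (hquadratic : ∀ (a : σ →₀ ℕ) (j : σ), a.degree = 2 → vectorField (monomial a (1 : K)) j ∈ S)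
    {m : σ →₀ ℕ} (hm : 3 ≤ m.degree) (i : σ) :
    vectorField (monomial m (1 : K)) i ∈ S := by
  induction h : m.degree using Nat.strong_induction_on generalizing m i with
  | _ d ih =>
    refine vectorField_monomial_mem_of_forall_degree_eq_pred hquadratic hm (fun b hb j => ?_) i
    rcases (show b.degree = 2 ∨ 3 ≤ b.degree by omega) with h2 | h3
    · exact hquadratic b j h2
    · exact ih _ (by omega) h3 j rfl

end Field

end MvPolynomial

section Lgrade

variable {K : Type*} [Field K] {n : ℕ}

lemma vectorField_monomial_mem_Lgrade {m : Fin n →₀ ℕ} {d : ℕ} (hm : m.degree = d + 1)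
    (i : Fin n) : vectorField (monomial m (1 : K)) i ∈ Lgrade K n d := by
  intro l
  rw [vectorField_apply, pderiv_X]
  by_cases hil : i = l
  · subst hil
    simpa using isHomogeneous_monomial (1 : K) hm
  · simp [hil]

lemma mem_vectorFieldsVanishingAtOrigin_of_mem_Lgrade {d : ℕ}
    {D : Derivation K (MvPolynomial (Fin n) K) (MvPolynomial (Fin n) K)} (hD : D ∈ Lgrade K n d) :
    D ∈ vectorFieldsVanishingAtOrigin (Fin n) K := fun i => by
  rw [← pow_one (idealOfVars _ _), mem_pow_idealOfVars_iff]
  intro m hm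
  have hdeg : m.degree = d + 1 := by
    by_contra h
    exact mem_support_iff.mp hm (((mem_homogeneousSubmodule _ _).mp (hD i)).coeff_eq_zero h)
  omega

end Lgrade

/-- If `n > 1` then `ℒ₊₊ = ⨁_{d ≥ 2} ℒ_d` (the vector fields with coefficients in `𝔪³`)
is generated as a Lie algebra by `ℒ₁`; consequently `ℒ₀ ⊕ ℒ₁` generates
`ℒ₊` (the vector fields with coefficients in `𝔪`) as a Lie algebra. -/
theorem stmt6 (hn : 1 < n) :
    (∀ D : Derivation k (MvPolynomial (Fin n) k) (MvPolynomial (Fin n) k),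
      (∀ i, D (X i) ∈ (mIdeal k n) ^ 3) →
        D ∈ LieSubalgebra.lieSpan k _ (Lgrade k n 1 : Set _)) ∧
    ((LieSubalgebra.lieSpan k
        (Derivation k (MvPolynomial (Fin n) k) (MvPolynomial (Fin n) k))
        ((Lgrade k n 0 : Set _) ∪ (Lgrade k n 1 : Set _)) : Set _)
      = {D : Derivation k (MvPolynomial (Fin n) k) (MvPolynomial (Fin n) k) |
          ∀ i, D (X i) ∈ mIdeal k n}) := by
  have : Nontrivial (Fin n) := Fin.nontrivial_iff_two_le.mpr hn
  have hquadratic (a : Fin n →₀ ℕ) (j : Fin n) (ha : a.degree = 2) :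
      vectorField (monomial a (1 : k)) j ∈ LieSubalgebra.lieSpan k _ (Lgrade k n 1 : Set _) :=
    LieSubalgebra.subset_lieSpan (vectorField_monomial_mem_Lgrade ha j)
  have hcubic : ∀ D : Derivation k (MvPolynomial (Fin n) k) (MvPolynomial (Fin n) k),
      (∀ i, D (X i) ∈ (mIdeal k n) ^ 3) → D ∈ LieSubalgebra.lieSpan k _ (Lgrade k n 1 : Set _) :=
    fun D hD => derivation_mem_of_forall_vectorField_monomial_mem fun i m hm =>
      vectorField_monomial_mem_of_three_le_degree hquadratic
        ((mem_pow_idealOfVars_iff 3 _).mp (hD i) m hm) i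
  refine ⟨hcubic, Set.Subset.antisymm ?_ fun D hD => ?_⟩
  · exact LieSubalgebra.lieSpan_le.mpr (Set.union_subset
      (fun _ => mem_vectorFieldsVanishingAtOrigin_of_mem_Lgrade)
      (fun _ => mem_vectorFieldsVanishingAtOrigin_of_mem_Lgrade))
  refine derivation_mem_of_forall_vectorField_monomial_mem fun i m hm => ?_
  have h1 : 1 ≤ m.degree := (mem_pow_idealOfVars_iff 1 _).mp (by rw [pow_one]; exact hD i) m hm
  obtain h | h | h : m.degree = 0 + 1 ∨ m.degree = 1 + 1 ∨ 3 ≤ m.degree := by omega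
  · exact LieSubalgebra.subset_lieSpan (Or.inl (vectorField_monomial_mem_Lgrade h i))
  · exact LieSubalgebra.subset_lieSpan (Or.inr (vectorField_monomial_mem_Lgrade h i))
  · exact LieSubalgebra.lieSpan_mono Set.subset_union_right
      (vectorField_monomial_mem_of_three_le_degree hquadratic h i)
end

section
/- Let $R$ be a commutative $\Bbbk$-algebra generated by elements $x_1,\dots,x_n$, and $M, N$ be $R$-modules. Then $D \in \mathrm{Hom}_{\Bbbk}(M,N)$ is a differential operator of order at most $s$ if and only if $\delta(x_1)^{m_1}\circ\cdots\circ\delta(x_n)^{m_n}(D) = 0$ for all multi-indices $m \in \mathbb{Z}_+^n$ with $|m| = s+1$. -/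
/-!
Since the operators `δ(f)` pairwise commute, a composition `δ(x_{i₁}) ∘ ⋯ ∘ δ(x_{iₖ})` depends
only on the multiset of indices, i.e. on a multi-index. Call `D` killed at level `s` if all such
compositions of length `s` vanish on `D`. The elements `f` for which `δ(f)` lowers this level by
one contain the generators and, by `δ(fg) = f ∘ δ(g) + δ(f) ∘ g` and the fact that `δ(x_i)`
commutes with multiplications, form a subalgebra; hence they are all of `R`. Grothendieck's
recursion then matches level `s + 1` with order at most `s`.
-/

/-- The adjoint operator `δ(f) D = D ∘ f - f ∘ D` on `Hom_k(M, N)`, where `f`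
acts by module multiplication. -/
noncomputable def delta {k R M N : Type*} [Field k] [CommRing R] [Algebra k R]
    [AddCommGroup M] [Module k M] [Module R M] [IsScalarTower k R M]
    [AddCommGroup N] [Module k N] [Module R N] [IsScalarTower k R N]
    (f : R) (D : M →ₗ[k] N) : M →ₗ[k] N :=
  D ∘ₗ ((LinearMap.lsmul R M f).restrictScalars k)
    - ((LinearMap.lsmul R N f).restrictScalars k) ∘ₗ D

/-- Grothendieck's inductive definition of differential operators: `D` has order
at most `s` iff `δ(f) D` has order at most `s - 1` for all `f`, with the operators
of order at most `0` being the `R`-linear maps (`δ(f) D = 0` for all `f`). -/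
def IsDiffLE {k R M N : Type*} [Field k] [CommRing R] [Algebra k R]
    [AddCommGroup M] [Module k M] [Module R M] [IsScalarTower k R M]
    [AddCommGroup N] [Module k N] [Module R N] [IsScalarTower k R N] :
    ℕ → (M →ₗ[k] N) → Prop
  | 0, D => ∀ f : R, delta f D = 0
  | s + 1, D => ∀ f : R, IsDiffLE (R := R) s (delta f D)

section Delta

variable {k R M N : Type*} [Field k] [CommRing R] [Algebra k R]
    [AddCommGroup M] [Module k M] [Module R M] [IsScalarTower k R M]
    [AddCommGroup N] [Module k N] [Module R N] [IsScalarTower k R N]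

lemma delta_apply (f : R) (D : M →ₗ[k] N) (m : M) :
    delta f D m = D (f • m) - f • D m := rfl

@[simp] lemma delta_zero (f : R) : delta f (0 : M →ₗ[k] N) = 0 := by
  ext m; simp [delta_apply]

lemma delta_add (f : R) (D E : M →ₗ[k] N) :
    delta f (D + E) = delta f D + delta f E := by
  ext m; simp only [delta_apply, LinearMap.add_apply, smul_add]; abel

lemma add_delta (f g : R) (D : M →ₗ[k] N) :
    delta (f + g) D = delta f D + delta g D := by
  ext m; simp only [delta_apply, LinearMap.add_apply, add_smul, map_add]; abel

lemma algebraMap_delta (c : k) (D : M →ₗ[k] N) :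
    delta (algebraMap k R c) D = 0 := by
  ext m; simp [delta_apply, algebraMap_smul]

lemma mul_delta (f g : R) (D : M →ₗ[k] N) :
    delta (f * g) D = ((LinearMap.lsmul R N f).restrictScalars k) ∘ₗ delta g D
      + delta f D ∘ₗ ((LinearMap.lsmul R M g).restrictScalars k) := by
  ext m
  simp only [delta_apply, LinearMap.add_apply, LinearMap.comp_apply,
    LinearMap.restrictScalars_apply, LinearMap.lsmul_apply, smul_sub, mul_smul]
  abel

lemma delta_comm (f g : R) (D : M →ₗ[k] N) :
    delta f (delta g D) = delta g (delta f D) := by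
  ext m
  simp only [delta_apply, smul_sub, smul_smul, mul_comm g f]
  abel

lemma delta_lsmul_comp (f g : R) (D : M →ₗ[k] N) :
    delta f (((LinearMap.lsmul R N g).restrictScalars k) ∘ₗ D)
      = ((LinearMap.lsmul R N g).restrictScalars k) ∘ₗ delta f D := by
  ext m
  simp only [delta_apply, LinearMap.comp_apply, LinearMap.restrictScalars_apply,
    LinearMap.lsmul_apply, smul_sub, smul_smul, mul_comm f g]

lemma delta_comp_lsmul (f g : R) (D : M →ₗ[k] N) :
    delta f (D ∘ₗ ((LinearMap.lsmul R M g).restrictScalars k))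
      = delta f D ∘ₗ ((LinearMap.lsmul R M g).restrictScalars k) := by
  ext m
  simp only [delta_apply, LinearMap.comp_apply, LinearMap.restrictScalars_apply,
    LinearMap.lsmul_apply, smul_smul, mul_comm f g]

variable {ι : Type*} (x : ι → R)

noncomputable def deltaList (l : List ι) (D : M →ₗ[k] N) : M →ₗ[k] N :=
  l.foldr (fun i E => delta (x i) E) D

@[simp] lemma deltaList_nil (D : M →ₗ[k] N) : deltaList x [] D = D := rfl

@[simp] lemma deltaList_cons (i : ι) (l : List ι) (D : M →ₗ[k] N) :
    deltaList x (i :: l) D = delta (x i) (deltaList x l D) := rfl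

lemma deltaList_append (l₁ l₂ : List ι) (D : M →ₗ[k] N) :
    deltaList x (l₁ ++ l₂) D = deltaList x l₁ (deltaList x l₂ D) :=
  List.foldr_append

@[simp] lemma deltaList_zero (l : List ι) : deltaList x l (0 : M →ₗ[k] N) = 0 := by
  induction l with
  | nil => rfl
  | cons i l ih => simp [ih]

lemma deltaList_add (l : List ι) (D E : M →ₗ[k] N) :
    deltaList x l (D + E) = deltaList x l D + deltaList x l E := by
  induction l with
  | nil => rfl
  | cons i l ih => simp [ih, delta_add]

lemma deltaList_lsmul_comp (l : List ι) (g : R) (D : M →ₗ[k] N) :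
    deltaList x l (((LinearMap.lsmul R N g).restrictScalars k) ∘ₗ D)
      = ((LinearMap.lsmul R N g).restrictScalars k) ∘ₗ deltaList x l D := by
  induction l with
  | nil => rfl
  | cons i l ih => simp [ih, delta_lsmul_comp]

lemma deltaList_comp_lsmul (l : List ι) (g : R) (D : M →ₗ[k] N) :
    deltaList x l (D ∘ₗ ((LinearMap.lsmul R M g).restrictScalars k))
      = deltaList x l D ∘ₗ ((LinearMap.lsmul R M g).restrictScalars k) := by
  induction l with
  | nil => rfl
  | cons i l ih => simp [ih, delta_comp_lsmul]

lemma deltaList_perm {l₁ l₂ : List ι} (h : l₁.Perm l₂) (D : M →ₗ[k] N) :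
    deltaList x l₁ D = deltaList x l₂ D := by
  induction h with
  | nil => rfl
  | cons i _ ih => simp [ih]
  | swap i j l => simp [delta_comm]
  | trans _ _ ih₁ ih₂ => rw [ih₁, ih₂]

lemma deltaList_replicate (i : ι) (t : ℕ) (D : M →ₗ[k] N) :
    deltaList x (List.replicate t i) D = (delta (x i))^[t] D := by
  induction t with
  | zero => rfl
  | succ t ih => rw [List.replicate_succ, deltaList_cons, ih, Function.iterate_succ_apply']

lemma foldr_iterate_delta (L : List ι) (m : ι → ℕ) (D : M →ₗ[k] N) :
    L.foldr (fun i E => (delta (x i))^[m i] E) D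
      = deltaList x (L.flatMap fun i => List.replicate (m i) i) D := by
  induction L with
  | nil => rfl
  | cons i L ih =>
    rw [List.foldr_cons, ih, List.flatMap_cons, deltaList_append, deltaList_replicate]

def IsKilledByDeltas (s : ℕ) (D : M →ₗ[k] N) : Prop :=
  ∀ l : List ι, l.length = s → deltaList x l D = 0

lemma isKilledByDeltas_zero_iff (D : M →ₗ[k] N) : IsKilledByDeltas x 0 D ↔ D = 0 := by
  refine ⟨fun h => h [] rfl, ?_⟩
  rintro rfl l -
  exact deltaList_zero x l

lemma IsKilledByDeltas.delta_of_mem_adjoin {f : R} (hf : f ∈ Algebra.adjoin k (Set.range x)) {s : ℕ}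
    {D : M →ₗ[k] N} (hD : IsKilledByDeltas x (s + 1) D) :
    IsKilledByDeltas x s (delta f D) := by
  induction hf using Algebra.adjoin_induction generalizing s D with
  | mem g hg =>
    obtain ⟨i, rfl⟩ := hg
    intro l hl
    have hcomm : deltaList x l (delta (x i) D) = deltaList x (l ++ [i]) D :=
      (deltaList_append x l [i] D).symm
    rw [hcomm, hD _ (by simp [hl])]
  | algebraMap c =>
    intro l _
    rw [algebraMap_delta, deltaList_zero]
  | add g h _ _ ihg ihh =>
    intro l hl
    rw [add_delta, deltaList_add, ihg hD l hl, ihh hD l hl, add_zero]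
  | mul g h _ _ ihg ihh =>
    intro l hl
    rw [mul_delta, deltaList_add, deltaList_lsmul_comp, deltaList_comp_lsmul,
      ihg hD l hl, ihh hD l hl, LinearMap.comp_zero, LinearMap.zero_comp, add_zero]

lemma isKilledByDeltas_succ_iff (hx : Algebra.adjoin k (Set.range x) = ⊤) (s : ℕ)
    (D : M →ₗ[k] N) :
    IsKilledByDeltas x (s + 1) D ↔ ∀ f : R, IsKilledByDeltas x s (delta f D) := by
  refine ⟨fun hD f => hD.delta_of_mem_adjoin x (hx ▸ Algebra.mem_top), fun h l hl => ?_⟩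
  obtain ⟨t, i, rfl⟩ := (List.eq_nil_or_concat l).resolve_left (by rintro rfl; simp at hl)
  rw [List.concat_eq_append, deltaList_append]
  exact h (x i) t (by simpa using hl)

lemma isDiffLE_iff_isKilledByDeltas (hx : Algebra.adjoin k (Set.range x) = ⊤) (s : ℕ)
    (D : M →ₗ[k] N) :
    IsDiffLE (R := R) s D ↔ IsKilledByDeltas x (s + 1) D := by
  induction s generalizing D with
  | zero => simp only [IsDiffLE, isKilledByDeltas_succ_iff x hx, isKilledByDeltas_zero_iff]
  | succ s ih => simp only [IsDiffLE, ih, ← isKilledByDeltas_succ_iff x hx]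

end Delta

section MultiIndex

variable {n : ℕ}

def wordOfMultiIndex (m : Fin n → ℕ) : List (Fin n) :=
  (List.finRange n).flatMap fun i => List.replicate (m i) i

lemma length_wordOfMultiIndex (m : Fin n → ℕ) :
    (wordOfMultiIndex m).length = ∑ i, m i := by
  simp [wordOfMultiIndex, List.length_flatMap, Fin.sum_univ_def]

lemma count_wordOfMultiIndex (m : Fin n → ℕ) (a : Fin n) :
    (wordOfMultiIndex m).count a = m a := by
  simp [wordOfMultiIndex, List.count_flatMap, List.count_replicate, Function.comp_def,
    ← Fin.sum_univ_def]

lemma perm_wordOfMultiIndex_count (l : List (Fin n)) :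
    l.Perm (wordOfMultiIndex fun i => l.count i) :=
  List.perm_iff_count.2 fun a => (count_wordOfMultiIndex (fun i => l.count i) a).symm

lemma sum_count_eq_length {ι : Type*} [Fintype ι] [DecidableEq ι] (l : List ι) :
    ∑ i, l.count i = l.length := by
  simpa using Multiset.sum_count_eq_card (s := Finset.univ) (m := (l : Multiset ι))
    (fun a _ => Finset.mem_univ a)

end MultiIndex

/-- If `R` is generated by `x₁, …, xₙ` as a `k`-algebra, then `D` is a differential
operator of order at most `s` iff `δ(x₁)^{m₁} ∘ ⋯ ∘ δ(xₙ)^{mₙ} (D) = 0` for every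
multi-index `m` with `|m| = s + 1`. -/
theorem stmt13 {k R M N : Type*} [Field k] [CommRing R] [Algebra k R]
    [AddCommGroup M] [Module k M] [Module R M] [IsScalarTower k R M]
    [AddCommGroup N] [Module k N] [Module R N] [IsScalarTower k R N]
    {n : ℕ} (x : Fin n → R) (hx : Algebra.adjoin k (Set.range x) = ⊤)
    (s : ℕ) (D : M →ₗ[k] N) :
    IsDiffLE (R := R) s D
      ↔ ∀ m : Fin n → ℕ, (∑ i, m i) = s + 1 →
          (List.finRange n).foldr (fun i E => (delta (x i))^[m i] E) D = 0 := by
  simp only [isDiffLE_iff_isKilledByDeltas x hx, foldr_iterate_delta]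
  constructor
  · intro hD m hm
    exact hD (wordOfMultiIndex m) (by rw [length_wordOfMultiIndex, hm])
  · intro h l hl
    rw [deltaList_perm x (perm_wordOfMultiIndex_count l)]
    exact h _ (by rw [sum_count_eq_length, hl])
end
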